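/- arXiv:1301.1453 — 8 statements merged into one kernel-verified Lean document; each statement's English description precedes it below -/
import Mathlib

section
/- Let $G$ be a cyclic $p$-group and $H_i \le H_k \le G$ subgroups of orders $p^i$ and $p^k$. Then the fiber product of $G$-sets $G/H_i \times_{G/H_k} G/H_j$ (over the canonical projections) is isomorphic as a $G$-set to the disjoint union of $p^{k-\max(i,j)}$ copies of $G/H_{\min(i,j)}$. -/
/-! For `G = ℤ/p^rℤ` and its subgroup `H_k = p^{r-k}ℤ/p^rℤ` of order `p^k`, the
quotient `G`-set `G/H_k` is canonically `ZMod (p^(r-k))`, with `G` acting by translation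
through the reduction map `ZMod.cast : ZMod (p^r) → ZMod (p^(r-k))`, and the projection
`G/H_i → G/H_k` (for `i ≤ k`) is `ZMod.cast`. -/

/-- The fiber product `G/H_i ×_{G/H_k} G/H_j` of the canonical projections. -/
def FibSet (p r i j k : ℕ) : Set (ZMod (p^(r-i)) × ZMod (p^(r-j))) :=
  {z | (ZMod.cast z.1 : ZMod (p^(r-k))) = (ZMod.cast z.2 : ZMod (p^(r-k)))}

/-! The map `(x, y) ↦ (y - x mod n, x)` identifies the fiber product
`ZMod m ×_{ZMod d} ZMod n` (for `d ∣ n ∣ m`) with `ker (ZMod n → ZMod d) × ZMod m`.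
Translation by `g` moves `y` and `x mod n` by the same amount, so it fixes the kernel
coordinate and acts by translation on `ZMod m`; the kernel has `n / d` elements. For
`G = ℤ/p^r` take `m = p^(r-i)`, `n = p^(r-j)`, `d = p^(r-k)` when `i ≤ j`, so that
`n / d = p^(k-j)`. -/

namespace ZMod

variable {c m n d : ℕ}

def castFiberProduct (m n d : ℕ) : Set (ZMod m × ZMod n) :=
  {z | (cast z.1 : ZMod d) = cast z.2}

theorem mem_castFiberProduct {z : ZMod m × ZMod n} :
    z ∈ castFiberProduct m n d ↔ (cast z.1 : ZMod d) = cast z.2 :=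
  Iff.rfl

theorem cast_cast_of_dvd (hnm : n ∣ m) (hmc : m ∣ c) (g : ZMod c) :
    (cast (cast g : ZMod m) : ZMod n) = cast g :=
  RingHom.congr_fun (castHom_comp hnm hmc) g

abbrev castKer (hdn : d ∣ n) : AddSubgroup (ZMod n) :=
  (castHom hdn (ZMod d)).toAddMonoidHom.ker

theorem mem_castKer {hdn : d ∣ n} {y : ZMod n} : y ∈ castKer hdn ↔ (cast y : ZMod d) = 0 :=
  Iff.rfl

theorem card_castKer [NeZero n] (hdn : d ∣ n) : Nat.card (castKer hdn) = n / d := by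
  have hd : d ≠ 0 := fun h => NeZero.ne n (Nat.eq_zero_of_zero_dvd (h ▸ hdn))
  have h := (castKer hdn).card_mul_index
  rw [AddSubgroup.index_ker, AddMonoidHom.range_eq_top.2 (castHom_surjective hdn),
    AddSubgroup.card_top, Nat.card_zmod, Nat.card_zmod] at h
  exact Nat.eq_div_of_mul_eq_left hd h

noncomputable def finEquivCastKer [NeZero n] (hdn : d ∣ n) : Fin (n / d) ≃ castKer hdn :=
  (finCongr (card_castKer hdn)).symm.trans (Finite.equivFin _).symm

def castFiberProductEquiv (hdn : d ∣ n) (hnm : n ∣ m) :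
    castFiberProduct m n d ≃ castKer hdn × ZMod m where
  toFun z := (⟨z.1.2 - cast z.1.1, by
    rw [mem_castKer, cast_sub hdn, cast_cast_of_dvd hdn hnm, mem_castFiberProduct.1 z.2,
      sub_self]⟩, z.1.1)
  invFun w := ⟨(w.2, cast w.2 + w.1), by
    rw [mem_castFiberProduct, cast_add hdn, cast_cast_of_dvd hdn hnm, mem_castKer.1 w.1.2,
      add_zero]⟩
  left_inv z := by ext <;> simp
  right_inv w := by ext <;> simp

theorem castFiberProductEquiv_translate (hdn : d ∣ n) (hnm : n ∣ m) (hmc : m ∣ c) (g : ZMod c)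
    (z : castFiberProduct m n d)
    (hz : ((cast g : ZMod m) + z.1.1, (cast g : ZMod n) + z.1.2) ∈
      castFiberProduct m n d) :
    castFiberProductEquiv hdn hnm ⟨_, hz⟩ =
      ((castFiberProductEquiv hdn hnm z).1, cast g + (castFiberProductEquiv hdn hnm z).2) := by
  ext
  · simp only [castFiberProductEquiv, Equiv.coe_fn_mk, cast_add hnm, cast_cast_of_dvd hnm hmc]
    abel
  · rfl

theorem exists_equiv_castFiberProduct [NeZero n] (hdn : d ∣ n) (hnm : n ∣ m) (hmc : m ∣ c) :
    ∃ e : castFiberProduct m n d ≃ Fin (n / d) × ZMod m,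
      ∀ (g : ZMod c) (z : castFiberProduct m n d)
        (hz : ((cast g : ZMod m) + z.1.1, (cast g : ZMod n) + z.1.2) ∈
          castFiberProduct m n d),
        e ⟨_, hz⟩ = ((e z).1, cast g + (e z).2) :=
  ⟨(castFiberProductEquiv hdn hnm).trans ((finEquivCastKer hdn).symm.prodCongr (Equiv.refl _)),
    fun g z hz => by
      simp only [Equiv.trans_apply, castFiberProductEquiv_translate hdn hnm hmc]
      rfl⟩

theorem exists_equiv_castFiberProduct_swap [NeZero n] (hdn : d ∣ n) (hnm : n ∣ m)
    (hmc : m ∣ c) :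
    ∃ e : castFiberProduct n m d ≃ Fin (n / d) × ZMod m,
      ∀ (g : ZMod c) (z : castFiberProduct n m d)
        (hz : ((cast g : ZMod n) + z.1.1, (cast g : ZMod m) + z.1.2) ∈
          castFiberProduct n m d),
        e ⟨_, hz⟩ = ((e z).1, cast g + (e z).2) := by
  obtain ⟨e, he⟩ := exists_equiv_castFiberProduct hdn hnm hmc
  let swap : castFiberProduct n m d ≃ castFiberProduct m n d :=
    Equiv.subtypeEquiv (Equiv.prodComm _ _) fun _ => eq_comm
  exact ⟨swap.trans e, fun g z hz => he g (swap z) hz.symm⟩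

end ZMod

/-- The fiber product `G/H_i ×_{G/H_k} G/H_j` is isomorphic, as a `G`-set, to the
disjoint union of `p^{k - max(i,j)}` copies of `G/H_{min(i,j)}` (where `G` acts
diagonally by translation on the fiber product, trivially on the `Fin` factor and by
translation on `G/H_{min(i,j)}`). -/
theorem fiber_product_of_projections (p r i j k : ℕ) (hp : p.Prime)
    (hik : i ≤ k) (hjk : j ≤ k) (hkr : k ≤ r) :
    ∃ e : FibSet p r i j k ≃ Fin (p ^ (k - max i j)) × ZMod (p ^ (r - min i j)),
      ∀ (g : ZMod (p^r)) (z : FibSet p r i j k)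
        (hz : ((ZMod.cast g : ZMod (p^(r-i))) + z.val.1,
               (ZMod.cast g : ZMod (p^(r-j))) + z.val.2) ∈ FibSet p r i j k),
        e ⟨((ZMod.cast g : ZMod (p^(r-i))) + z.val.1,
            (ZMod.cast g : ZMod (p^(r-j))) + z.val.2), hz⟩
          = ((e z).1, (ZMod.cast g : ZMod (p^(r - min i j))) + (e z).2) := by
  have : NeZero p := ⟨hp.ne_zero⟩
  have hdvd {a b : ℕ} (h : a ≤ b) : p ^ (r - b) ∣ p ^ (r - a) :=
    pow_dvd_pow p (Nat.sub_le_sub_left h r)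
  have hquot {a : ℕ} (h : a ≤ k) : p ^ (r - a) / p ^ (r - k) = p ^ (k - a) := by
    rw [Nat.pow_div (by omega) hp.pos]
    congr 1
    omega
  rcases le_total i j with hij | hji
  · rw [max_eq_right hij, min_eq_left hij, ← hquot hjk]
    exact ZMod.exists_equiv_castFiberProduct (hdvd hjk) (hdvd hij)
      (pow_dvd_pow p (Nat.sub_le r i))
  · rw [max_eq_left hji, min_eq_right hji, ← hquot hik]
    exact ZMod.exists_equiv_castFiberProduct_swap (hdvd hik) (hdvd hji)
      (pow_dvd_pow p (Nat.sub_le r j))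
end

section
/- The Burnside ring of a cyclic group of order $p^k$ is isomorphic as a ring to the quotient of the polynomial ring $\mathbb{Z}[X_0,\ldots,X_k]$ by the ideal generated by the relations $X_i X_j - p^{k-\max(i,j)} X_{\min(i,j)}$ for $0 \le i,j \le k$, together with $X_k - 1$. -/
/-! We model the Burnside ring of the cyclic group `C_{p^ℓ}` via its (injective) mark
homomorphism: `Xe p ℓ i` is the vector of marks of the transitive `C_{p^ℓ}`-set
`C_{p^ℓ}/C_{p^i}`, namely `j ↦ #(fixed points of C_{p^j})`, stabilized for `j ≥ ℓ`.
The Burnside ring `BR p ℓ` is the subring of `ℕ → ℤ` generated by these mark vectors. -/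

/-- Marks of the basis element `X_{ℓ,i} = [C_{p^ℓ}/C_{p^i}]`. -/
def Xe (p l i : ℕ) : ℕ → ℤ := fun j => if min j l ≤ i then (p : ℤ) ^ (l - i) else 0

/-- The Burnside ring of `C_{p^ℓ}`, realized as a subring of the ghost ring `ℕ → ℤ`. -/
def BR (p l : ℕ) : Subring (ℕ → ℤ) := Subring.closure (Set.range (Xe p l))

/-- The basis element `X_{ℓ,i}` as an element of the Burnside ring. -/
def Xb (p l i : ℕ) : BR p l := ⟨Xe p l i, Subring.subset_closure ⟨i, rfl⟩⟩

/-- `F_{ℓ,i} = X_{ℓ,i} - p^{ℓ-i}` in the Burnside ring. -/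
def Fb (p l i : ℕ) : BR p l := Xb p l i - (p : BR p l) ^ (l - i)

/-- `F_{ℓ,i} = X_{ℓ,i} - p^{ℓ-i}` as a mark vector. -/
def Fe (p l i : ℕ) : ℕ → ℤ := Xe p l i - (p : ℕ → ℤ) ^ (l - i)

/-- Restriction `res^ℓ_k` to the subgroup `C_{p^k}` on mark vectors: truncation of marks. -/
def resA (k : ℕ) : (ℕ → ℤ) →+* (ℕ → ℤ) :=
  Pi.ringHom fun j => Pi.evalRingHom (fun _ => ℤ) (min j k)

/-- Additive transfer (induction) `ind^{m+1}_m` on mark vectors. -/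
def indA (p m : ℕ) (a : ℕ → ℤ) : ℕ → ℤ := fun j => if j ≤ m then p * a j else 0

/-- Multiplicative transfer (norm) `jnd^{m+1}_m` on mark vectors. -/
def jndA (p m : ℕ) (a : ℕ → ℤ) : ℕ → ℤ := fun j => if j ≤ m then (a j) ^ p else a m

/-- The ideal `J_{ℓ,k}(x) = (x, F_{ℓ,k}, …, F_{ℓ,ℓ-1})` of the Burnside ring. -/
def Jb (p l k : ℕ) (x : ℤ) : Ideal (BR p l) :=
  Ideal.span (insert (x : BR p l) (Fb p l '' Set.Ico k l))

/-! Sending `X_i` to the mark vector of `C_{p^k}/C_{p^i}` respects the relations, and these mark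
vectors generate the Burnside ring, so the presented ring maps onto it. The relations rewrite every
monomial as an integer multiple of a single `X_i`, so the presented ring is spanned over `ℤ` by the
`X_i`; their images are linearly independent because the matrix of marks `(Xe i j)_{j,i ≤ k}` is
upper triangular with diagonal entries `p^{k-i} ≠ 0`. Hence the map is also injective. -/

open MvPolynomial Function Submodule

theorem Submodule.span_range_eq_top_of_mul_mem {R A ι : Type*} [CommSemiring R] [Semiring A]
    [Algebra R A] {x : ι → A} (hgen : Algebra.adjoin R (Set.range x) = ⊤)
    (hone : 1 ∈ span R (Set.range x)) (hmul : ∀ i j, x i * x j ∈ span R (Set.range x)) :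
    span R (Set.range x) = ⊤ := by
  have hclosed : ∀ a b, a ∈ span R (Set.range x) → b ∈ span R (Set.range x) →
      a * b ∈ span R (Set.range x) := by
    refine fun a b ha hb => mul_le.mp ?_ a ha b hb
    rw [span_mul_span, span_le]
    rintro _ ⟨_, ⟨i, rfl⟩, _, ⟨j, rfl⟩, rfl⟩
    exact hmul i j
  refine eq_top_iff.mpr fun a _ => ?_
  have ha : a ∈ Algebra.adjoin R (Set.range x) := hgen ▸ Algebra.mem_top
  exact Algebra.adjoin_le (S := (span R (Set.range x)).toSubalgebra hone hclosed) subset_span ha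

theorem LinearMap.injective_of_linearIndependent_comp {R M N ι : Type*} [Ring R]
    [AddCommGroup M] [Module R M] [AddCommGroup N] [Module R N] {v : ι → M}
    (hv : span R (Set.range v) = ⊤) (f : M →ₗ[R] N) (hf : LinearIndependent R (f ∘ v)) :
    Injective f := by
  rw [← LinearMap.ker_eq_bot, eq_bot_iff]
  intro m hm
  obtain ⟨c, rfl⟩ : m ∈ LinearMap.range (Finsupp.linearCombination R v) := by
    rw [Finsupp.range_linearCombination, hv]
    exact mem_top
  rw [LinearMap.mem_ker, Finsupp.apply_linearCombination] at hm
  rw [linearIndependent_iff.mp hf c hm, map_zero]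
  exact zero_mem _

theorem Xe_of_le {p l i : ℕ} (h : l ≤ i) : Xe p l i = 1 := by
  funext j
  simp [Xe, min_le_of_right_le h, Nat.sub_eq_zero_of_le h]

theorem Xe_mul (p l i j : ℕ) :
    Xe p l i * Xe p l j = (p : ℕ → ℤ) ^ (l - max i j) * Xe p l (min i j) := by
  have hexp : (l - i) + (l - j) = (l - max i j) + (l - min i j) := by omega
  funext m
  by_cases hi : min m l ≤ i <;> by_cases hj : min m l ≤ j <;>
    simp [Xe, hi, hj, ← pow_add, hexp]

theorem linearIndependent_Xe {p : ℕ} (hp : p ≠ 0) (l : ℕ) :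
    LinearIndependent ℤ fun i : Fin (l + 1) => Xe p l i := by
  let A : Matrix (Fin (l + 1)) (Fin (l + 1)) ℤ := .of fun j i => Xe p l i j
  have hA : A.IsUpperTriangular := fun j i (hij : i < j) => by
    have : ¬ min (j : ℕ) l ≤ i := by omega
    simp only [A, Matrix.of_apply, Xe, if_neg this]
  have hdet : A.det ≠ 0 := by
    rw [Matrix.det_of_isUpperTriangular hA]
    exact Finset.prod_ne_zero_iff.mpr fun i _ => by simp [A, Xe, hp]
  exact LinearIndependent.of_comp (LinearMap.funLeft ℤ ℤ (Fin.val : Fin (l + 1) → ℕ))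
    (Matrix.linearIndependent_cols_of_det_ne_zero hdet)

theorem Xb_of_le {p l i : ℕ} (h : l ≤ i) : Xb p l i = 1 :=
  Subtype.ext (Xe_of_le h)

theorem Xb_mul (p l i j : ℕ) :
    Xb p l i * Xb p l j = (p : BR p l) ^ (l - max i j) * Xb p l (min i j) :=
  Subtype.ext (Xe_mul p l i j)

noncomputable def presentationIdeal (p k : ℕ) : Ideal (MvPolynomial (Fin (k + 1)) ℤ) :=
  Ideal.span
    ((Set.range fun ij : Fin (k + 1) × Fin (k + 1) =>
        X ij.1 * X ij.2 - C ((p : ℤ) ^ (k - max (ij.1 : ℕ) (ij.2 : ℕ))) * X (min ij.1 ij.2))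
      ∪ {X (Fin.last k) - 1})

section Presentation

variable (p k : ℕ)

open Ideal.Quotient (mk)

theorem presentationIdeal_le_ker :
    presentationIdeal p k ≤ RingHom.ker (aeval fun i : Fin (k + 1) => Xb p k i).toRingHom := by
  rw [presentationIdeal, Ideal.span_le]
  rintro _ (⟨⟨i, j⟩, rfl⟩ | rfl)
  · simp [Xb_mul, Fin.coe_min]
  · simp [Xb_of_le]

noncomputable def presentationHom :
    (MvPolynomial (Fin (k + 1)) ℤ ⧸ presentationIdeal p k) →+* BR p k :=
  Ideal.Quotient.lift _ _ fun _ ha => presentationIdeal_le_ker p k ha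

@[simp]
theorem presentationHom_mk_X (i : Fin (k + 1)) :
    presentationHom p k (mk _ (X i)) = Xb p k i := by
  simp [presentationHom]

theorem mk_X_mul_mk_X (i j : Fin (k + 1)) :
    mk (presentationIdeal p k) (X i) * mk (presentationIdeal p k) (X j) =
      ((p : ℤ) ^ (k - max (i : ℕ) j)) • mk (presentationIdeal p k) (X (min i j)) := by
  have hrel : X i * X j - C ((p : ℤ) ^ (k - max (i : ℕ) j)) * X (min i j) ∈
      presentationIdeal p k := Ideal.subset_span (Or.inl ⟨(i, j), rfl⟩)
  rw [← map_mul, Ideal.Quotient.eq.mpr hrel]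
  simp [zsmul_eq_mul]

theorem mk_X_last : mk (presentationIdeal p k) (X (Fin.last k)) = 1 := by
  have hrel : X (Fin.last k) - 1 ∈ presentationIdeal p k := Ideal.subset_span (Or.inr rfl)
  rw [Ideal.Quotient.eq.mpr hrel, map_one]

theorem span_mk_X_eq_top :
    span ℤ (Set.range fun i : Fin (k + 1) => mk (presentationIdeal p k) (X i)) = ⊤ := by
  refine span_range_eq_top_of_mul_mem ?_ ?_ fun i j => ?_
  · change Algebra.adjoin ℤ (Set.range (Ideal.Quotient.mkₐ ℤ (presentationIdeal p k) ∘ X)) = ⊤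
    rw [Set.range_comp, Algebra.adjoin_image, adjoin_range_X, Algebra.map_top,
      AlgHom.range_eq_top]
    exact Ideal.Quotient.mkₐ_surjective ℤ _
  · rw [← mk_X_last p k]
    exact subset_span ⟨_, rfl⟩
  · rw [mk_X_mul_mk_X]
    exact smul_mem _ _ (subset_span ⟨_, rfl⟩)

theorem presentationHom_surjective : Surjective (presentationHom p k) := by
  have hrange : BR p k ≤ (presentationHom p k).range.map (BR p k).subtype := by
    refine Subring.closure_le.mpr ?_
    rintro _ ⟨i, rfl⟩
    rcases le_or_gt i k with hi | hi
    · exact ⟨Xb p k i, ⟨_, presentationHom_mk_X p k ⟨i, by omega⟩⟩, rfl⟩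
    · exact ⟨1, Subring.one_mem _, by simp [Xe_of_le hi.le]⟩
  intro b
  obtain ⟨_, ⟨q, rfl⟩, hq⟩ := hrange b.2
  exact ⟨q, Subtype.ext hq⟩

theorem presentationHom_injective (hp : p ≠ 0) :
    Injective (presentationHom p k) := by
  refine (presentationHom p k).toAddMonoidHom.toIntLinearMap.injective_of_linearIndependent_comp
    (span_mk_X_eq_top p k) ?_
  have hmarks : (BR p k).subtype.toAddMonoidHom.toIntLinearMap ∘ presentationHom p k ∘
      (mk (presentationIdeal p k) ∘ X) = fun i : Fin (k + 1) => Xe p k i :=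
    funext fun i => by simp [Xb]
  exact LinearIndependent.of_comp _ (hmarks ▸ linearIndependent_Xe hp k)

end Presentation

/-- The Burnside ring of `C_{p^k}` is isomorphic to
`ℤ[X_0,…,X_k] / (X_iX_j - p^{k-max(i,j)}X_{min(i,j)}  (0 ≤ i,j ≤ k),  X_k - 1)`. -/
theorem burnside_presentation (p k : ℕ) (hp : p.Prime) :
    Nonempty ((MvPolynomial (Fin (k+1)) ℤ ⧸ (Ideal.span
        ((Set.range fun ij : Fin (k+1) × Fin (k+1) =>
            MvPolynomial.X ij.1 * MvPolynomial.X ij.2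
              - MvPolynomial.C ((p : ℤ) ^ (k - max (ij.1 : ℕ) (ij.2 : ℕ)))
                * MvPolynomial.X (min ij.1 ij.2))
          ∪ {MvPolynomial.X (Fin.last k) - 1}))) ≃+* BR p k) :=
  ⟨RingEquiv.ofBijective (presentationHom p k)
    ⟨presentationHom_injective p k hp.ne_zero, presentationHom_surjective p k⟩⟩
end

section
/- Let $p$ be a prime, $1 \le \ell$, $0 \le k \le \ell - 1$, and $x \in \mathbb{Z}$. In the Burnside ring $R_\ell$ of $C_{p^\ell}$, the ideal $J_{\ell,k}(x) = (x, F_{\ell,k}, F_{\ell,k+1}, \ldots, F_{\ell,\ell-1})$ equals the set of elements $m_\ell + \sum_{i=0}^{\ell-1} m_i F_{\ell,i}$ (with $m_i \in \mathbb{Z}$) such that $x \mid m_\ell$ and $x \mid m_i$ for all $0 \le i \le k-1$. -/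
/-! Everything is read off the marks. An element `a` of `R_ℓ` is a mark vector constant from
index `ℓ` on, with `p^{ℓ-i} ∣ a i - a (i+1)`; since the `i`-th mark of `F_{ℓ,i'}` is `-p^{ℓ-i'}`
for `i' < i` and `0` otherwise, the coordinates of `a` in the basis `1, F_{ℓ,0}, …, F_{ℓ,ℓ-1}`
are `a 0` and `(a i - a (i+1)) / p^{ℓ-i}`. On the other side, every element `a` of
`J_{ℓ,k}(x)` satisfies `x ∣ a 0` and `x p^{ℓ-i} ∣ a i - a (i+1)` for `i < k`, because these
conditions cut out an ideal of `R_ℓ` containing `x` and `F_{ℓ,k}, …, F_{ℓ,ℓ-1}`. -/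

open Finset

section StepCongr

variable {R : Type*} [CommRing R]

def stepCongr (d : ℕ → R) : Subring (ℕ → R) :=
  ⨅ i, ((Ideal.Quotient.mk (Ideal.span {d i})).comp (Pi.evalRingHom (fun _ => R) i)).eqLocus
    ((Ideal.Quotient.mk (Ideal.span {d i})).comp (Pi.evalRingHom (fun _ => R) (i + 1)))

theorem mem_stepCongr {d a : ℕ → R} : a ∈ stepCongr d ↔ ∀ i, d i ∣ a i - a (i + 1) := by
  simp [stepCongr, Subring.mem_iInf, RingHom.mem_eqLocus, Ideal.Quotient.eq,
    Ideal.mem_span_singleton]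

theorem dvd_apply_of_dvd_sub_succ {x : R} {a : ℕ → R} {k : ℕ} (h0 : x ∣ a 0)
    (hsucc : ∀ i < k, x ∣ a i - a (i + 1)) : ∀ j ≤ k, x ∣ a j := by
  intro j hj
  induction j with
  | zero => exact h0
  | succ j ih =>
    have := dvd_sub (ih (by omega)) (hsucc j (by omega))
    rwa [sub_sub_cancel] at this

end StepCongr

section Marks

variable {p l : ℕ}

theorem BR_le_eqLocus_resA : BR p l ≤ (resA l).eqLocus (RingHom.id _) :=
  Subring.closure_le.2 <| by
    rintro _ ⟨i, rfl⟩
    funext j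
    show Xe p l i (min j l) = Xe p l i j
    simp [Xe]

theorem apply_min_of_mem_BR {a : ℕ → ℤ} (ha : a ∈ BR p l) (j : ℕ) : a (min j l) = a j :=
  congrFun (BR_le_eqLocus_resA ha) j

theorem BR_le_stepCongr : BR p l ≤ stepCongr fun i => (p : ℤ) ^ (l - i) :=
  Subring.closure_le.2 <| by
    rintro _ ⟨i, rfl⟩
    refine mem_stepCongr.2 fun j => ?_
    by_cases hj : min j l ≤ i <;> by_cases hj' : min (j + 1) l ≤ i
    · simp [Xe, hj, hj']
    · obtain rfl : i = j := by omega
      simp [Xe, hj, hj']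
    · omega
    · simp [Xe, hj, hj']

theorem pow_dvd_sub_succ_of_mem_BR {a : ℕ → ℤ} (ha : a ∈ BR p l) (i : ℕ) :
    (p : ℤ) ^ (l - i) ∣ a i - a (i + 1) :=
  mem_stepCongr.1 (BR_le_stepCongr ha) i

theorem coe_Fb (i : ℕ) : ((Fb p l i : BR p l) : ℕ → ℤ) = Fe p l i := by
  simp [Fb, Fe, Xb]

theorem sum_smul_Fe_apply (m : ℕ → ℤ) (j : ℕ) :
    (∑ i ∈ range l, m i • Fe p l i) j = -∑ i ∈ range (min j l), m i * (p : ℤ) ^ (l - i) := by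
  rw [Finset.sum_apply, ← Finset.sum_range_add_sum_Ico _ (min_le_right j l),
    Finset.sum_eq_zero (s := Ico _ _), add_zero, ← Finset.sum_neg_distrib]
  · refine Finset.sum_congr rfl fun i hi => ?_
    have : ¬ min j l ≤ i := by simpa using hi
    simp [Fe, Xe, this]
  · intro i hi
    have : min j l ≤ i := (Finset.mem_Ico.1 hi).1
    simp [Fe, Xe, this]

end Marks

/-- The coordinates of `a` in the basis `1, F_{ℓ,0}, …, F_{ℓ,ℓ-1}`, the constant term being
stored at index `ℓ`. -/
def Fcoeff (p l : ℕ) (a : ℕ → ℤ) (i : ℕ) : ℤ :=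
  if i = l then a 0 else (a i - a (i + 1)) / (p : ℤ) ^ (l - i)

theorem eq_Fcoeff_add_sum_smul_Fe {p l : ℕ} {a : ℕ → ℤ} (ha : a ∈ BR p l) :
    a = (fun _ => Fcoeff p l a l) + ∑ i ∈ range l, Fcoeff p l a i • Fe p l i := by
  funext j
  have hcoeff : ∀ i ∈ range (min j l), Fcoeff p l a i * (p : ℤ) ^ (l - i) = a i - a (i + 1) :=
    fun i hi => by
      have hil : i ≠ l := by have := Finset.mem_range.1 hi; omega
      simp only [Fcoeff, if_neg hil]
      exact Int.ediv_mul_cancel (pow_dvd_sub_succ_of_mem_BR ha i)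
  rw [Pi.add_apply, sum_smul_Fe_apply, Finset.sum_congr rfl hcoeff, Finset.sum_range_sub',
    apply_min_of_mem_BR ha, Fcoeff, if_pos rfl]
  ring

theorem eq_Fcoeff_add_sum_smul_Fb {p l : ℕ} (a : BR p l) :
    a = (Fcoeff p l a l : BR p l) + ∑ i ∈ range l, Fcoeff p l a i • Fb p l i := by
  apply Subtype.ext
  push_cast [coe_Fb]
  exact eq_Fcoeff_add_sum_smul_Fe a.2

def markJ (p l k : ℕ) (x : ℤ) : Ideal (BR p l) where
  carrier := {a | x ∣ (a : ℕ → ℤ) 0 ∧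
    ∀ i < k, x * (p : ℤ) ^ (l - i) ∣ (a : ℕ → ℤ) i - (a : ℕ → ℤ) (i + 1)}
  zero_mem' := by simp
  add_mem' := by
    rintro a b ⟨ha0, ha⟩ ⟨hb0, hb⟩
    refine ⟨by simpa using dvd_add ha0 hb0, fun i hi => ?_⟩
    rw [Subring.coe_add, Pi.add_apply, Pi.add_apply, add_sub_add_comm]
    exact dvd_add (ha i hi) (hb i hi)
  smul_mem' := by
    rintro r a ⟨ha0, ha⟩
    have hax : ∀ j ≤ k, x ∣ (a : ℕ → ℤ) j :=
      dvd_apply_of_dvd_sub_succ ha0 fun i hi => (dvd_mul_right x _).trans (ha i hi)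
    refine ⟨by simpa using ha0.mul_left _, fun i hi => ?_⟩
    have hsplit : (r : ℕ → ℤ) i * (a : ℕ → ℤ) i - (r : ℕ → ℤ) (i + 1) * (a : ℕ → ℤ) (i + 1)
        = (r : ℕ → ℤ) i * ((a : ℕ → ℤ) i - (a : ℕ → ℤ) (i + 1))
          + (a : ℕ → ℤ) (i + 1) * ((r : ℕ → ℤ) i - (r : ℕ → ℤ) (i + 1)) := by ring
    simp only [smul_eq_mul, Subring.coe_mul, Pi.mul_apply, hsplit]
    exact dvd_add ((ha i hi).mul_left _)
      (mul_dvd_mul (hax (i + 1) hi) (pow_dvd_sub_succ_of_mem_BR r.2 i))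

theorem Jb_le_markJ (p l k : ℕ) (x : ℤ) : Jb p l k x ≤ markJ p l k x := by
  refine Ideal.span_le.2 ?_
  rintro _ (rfl | ⟨i, hi, rfl⟩)
  · exact ⟨by simp, fun i _ => by simp⟩
  · have hki : k ≤ i := (Set.mem_Ico.1 hi).1
    refine ⟨by simp [coe_Fb, Fe, Xe], fun j hj => ?_⟩
    have h1 : min j l ≤ i := by omega
    have h2 : min (j + 1) l ≤ i := by omega
    simp [coe_Fb, Fe, Xe, h1, h2]

theorem dvd_Fcoeff_of_mem_Jb {p l k : ℕ} {x : ℤ} {a : BR p l} (ha : a ∈ Jb p l k x) :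
    x ∣ Fcoeff p l a l ∧ ∀ i < k, x ∣ Fcoeff p l a i := by
  obtain ⟨ha0, ha⟩ := Jb_le_markJ p l k x ha
  refine ⟨by simpa [Fcoeff] using ha0, fun i hi => ?_⟩
  unfold Fcoeff
  split_ifs
  · exact ha0
  · exact Int.dvd_div_of_mul_dvd (mul_comm x _ ▸ ha i hi)

theorem add_sum_smul_Fb_mem_Jb {p l k : ℕ} {x : ℤ} {m : ℕ → ℤ} (hconst : x ∣ m l)
    (hcoeff : ∀ i < k, x ∣ m i) :
    (m l : BR p l) + ∑ i ∈ range l, m i • Fb p l i ∈ Jb p l k x := by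
  have hx : (x : BR p l) ∈ Jb p l k x := Ideal.subset_span (Set.mem_insert _ _)
  have hxdvd : ∀ {n : ℤ}, x ∣ n → (n : BR p l) ∈ Jb p l k x := by
    rintro _ ⟨c, rfl⟩
    push_cast
    exact Ideal.mul_mem_right _ _ hx
  refine Ideal.add_mem _ (hxdvd hconst) (Ideal.sum_mem _ fun i hi => ?_)
  rw [zsmul_eq_mul]
  by_cases hik : i < k
  · exact Ideal.mul_mem_right _ _ (hxdvd (hcoeff i hik))
  · exact Ideal.mul_mem_left _ _ <| Ideal.subset_span <|
      Set.mem_insert_of_mem _ ⟨i, ⟨by omega, by simpa using hi⟩, rfl⟩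

theorem J_mem_general (p l k : ℕ) (x : ℤ) :
    ∀ a : BR p l, a ∈ Jb p l k x ↔
      ∃ m : ℕ → ℤ, a = (m l : BR p l) + ∑ i ∈ Finset.range l, m i • Fb p l i
        ∧ x ∣ m l ∧ ∀ i < k, x ∣ m i := by
  intro a
  constructor
  · intro ha
    exact ⟨Fcoeff p l a, eq_Fcoeff_add_sum_smul_Fb a, dvd_Fcoeff_of_mem_Jb ha⟩
  · rintro ⟨m, rfl, hconst, hcoeff⟩
    exact add_sum_smul_Fb_mem_Jb hconst hcoeff

/-- Explicit description of the ideal `J_{ℓ,k}(x) = (x, F_{ℓ,k}, …, F_{ℓ,ℓ-1})` of `R_ℓ`: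
it consists of the elements `m_ℓ + ∑_{i<ℓ} m_i F_{ℓ,i}` with `x ∣ m_ℓ` and
`x ∣ m_i` for all `i < k`. -/
theorem J_mem (p l k : ℕ) (hp : p.Prime) (hl : 1 ≤ l) (hk : k ≤ l - 1) (x : ℤ) :
    ∀ a : BR p l, a ∈ Jb p l k x ↔
      ∃ m : ℕ → ℤ, a = (m l : BR p l) + ∑ i ∈ Finset.range l, m i • Fb p l i
        ∧ x ∣ m l ∧ ∀ i < k, x ∣ m i :=
  J_mem_general p l k x
end

section
/- Let $p$ be a prime, $\ell \ge 1$, $e \ge 0$. In the Burnside ring $R_\ell$ of $C_{p^\ell}$, there is no ideal strictly between $J_{\ell,0}(p^{e+2}) = (p^{e+2}, F_{\ell,0}, \ldots, F_{\ell,\ell-1})$ and $J_{\ell,0}(p^{e+1}) = (p^{e+1}, F_{\ell,0}, \ldots, F_{\ell,\ell-1})$. -/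
/-!
The mark at the trivial subgroup, i.e. the cardinality `φ : R_ℓ → ℤ`, is a surjective ring
homomorphism, and modulo the `F_{ℓ,i}` every generator `X_{ℓ,i}` is congruent to the integer
`p^{ℓ-i} = φ(X_{ℓ,i})`. Hence `J_{ℓ,0}(x) = φ⁻¹(xℤ)`, and by the correspondence theorem for the
surjection `φ` the claim reduces to `p^{e+2}ℤ ⋖ p^{e+1}ℤ` in `ℤ`.
-/

theorem Subring.closure_closure_coe_preimage {R : Type*} [Ring R] {s : Set R} :
    closure (((↑) : closure s → R) ⁻¹' s) = ⊤ := by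
  rw [← comap_map_eq_self_of_injective (closure s).subtype_injective (closure _),
    RingHom.map_closure, coe_subtype,
    Set.image_preimage_eq_of_subset (by simp [subset_closure]), eq_top_iff]
  exact fun x _ => x.2

theorem Ideal.comap_covBy_of_surjective {R S : Type*} [CommRing R] [CommRing S] {f : R →+* S}
    (hf : Function.Surjective f) {A B : Ideal S} (h : A ⋖ B) : A.comap f ⋖ B.comap f :=
  have : RingHomSurjective f := ⟨hf⟩
  Submodule.comap_covBy_of_surjective (f := f.toSemilinearMap) hf h

theorem Ideal.span_singleton_pow_succ_covBy {R : Type*} [CommRing R] [IsDomain R]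
    [IsPrincipalIdealRing R] {p : R} (hp : Prime p) (n : ℕ) :
    Ideal.span {p ^ (n + 1)} ⋖ Ideal.span {p ^ n} := by
  refine covBy_iff_lt_and_eq_or_eq.mpr ⟨?_, fun J hlo hhi => ?_⟩
  · exact Ideal.span_singleton_lt_span_singleton.mpr
      ⟨pow_ne_zero n hp.ne_zero, p, hp.not_isUnit, pow_succ p n⟩
  rw [← Ideal.span_singleton_generator J] at hlo hhi ⊢
  set a := Submodule.IsPrincipal.generator J
  rw [Ideal.span_singleton_le_span_singleton] at hlo hhi
  obtain ⟨i, hi, hai⟩ := (dvd_prime_pow hp (n + 1)).mp hlo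
  rw [Ideal.span_singleton_eq_span_singleton.mpr hai]
  have hni : n ≤ i := (pow_dvd_pow_iff hp.ne_zero hp.not_isUnit).mp (hhi.trans hai.dvd)
  obtain rfl | rfl : i = n + 1 ∨ i = n := by omega
  exacts [Or.inl rfl, Or.inr rfl]

namespace BR

variable {p l : ℕ}

def cardHom (p l : ℕ) : BR p l →+* ℤ :=
  (Pi.evalRingHom (fun _ => ℤ) 0).comp (BR p l).subtype

theorem cardHom_surjective : Function.Surjective (cardHom p l) :=
  fun n => ⟨n, map_intCast _ n⟩

@[simp]
theorem cardHom_Xb (i : ℕ) : cardHom p l (Xb p l i) = (p : ℤ) ^ (l - i) := by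
  simp [cardHom, Xb, Xe]

@[simp]
theorem cardHom_Fb (i : ℕ) : cardHom p l (Fb p l i) = 0 := by
  simp [Fb]

theorem Xb_eq_one_of_le {i : ℕ} (h : l ≤ i) : Xb p l i = 1 := by
  ext j
  simp [Xb, Xe, Nat.sub_eq_zero_of_le h, min_le_of_right_le h]

theorem Fb_mem_Jb (x : ℤ) (i : ℕ) : Fb p l i ∈ Jb p l 0 x := by
  rcases lt_or_ge i l with hi | hi
  · exact Ideal.subset_span (Set.mem_insert_of_mem _ ⟨i, ⟨i.zero_le, hi⟩, rfl⟩)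
  · simp [Fb, Xb_eq_one_of_le hi, Nat.sub_eq_zero_of_le hi]

theorem quotientMk_Jb_eq_cardHom (x : ℤ) :
    Ideal.Quotient.mk (Jb p l 0 x) = (Int.castRingHom _).comp (cardHom p l) := by
  refine RingHom.eq_of_eqOn_set_dense Subring.closure_closure_coe_preimage ?_
  rintro ⟨_, _⟩ ⟨i, rfl⟩
  change Ideal.Quotient.mk _ (Xb p l i) = ((cardHom p l (Xb p l i) : ℤ) : _)
  rw [cardHom_Xb, ← map_intCast (Ideal.Quotient.mk (Jb p l 0 x)), Ideal.Quotient.eq]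
  simpa [Fb] using Fb_mem_Jb x i

theorem Jb_zero_eq_comap (x : ℤ) :
    Jb p l 0 x = (Ideal.span {x}).comap (cardHom p l) := by
  refine le_antisymm ?_ fun r hr => ?_
  · rw [Jb, Ideal.span_le]
    rintro _ (rfl | ⟨i, -, rfl⟩) <;> simp
  · obtain ⟨m, hm⟩ := Ideal.mem_span_singleton.mp (Ideal.mem_comap.mp hr)
    have hx : ((x : ℤ) : BR p l ⧸ Jb p l 0 x) = 0 := by
      rw [← map_intCast (Ideal.Quotient.mk (Jb p l 0 x)), Ideal.Quotient.eq_zero_iff_mem]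
      exact Ideal.subset_span (Set.mem_insert _ _)
    rw [← Ideal.Quotient.eq_zero_iff_mem, quotientMk_Jb_eq_cardHom, RingHom.comp_apply, hm,
      eq_intCast, Int.cast_mul, hx, zero_mul]

end BR

theorem no_ideal_between_Jp_general (p l e : ℕ) (hp : p.Prime) (I : Ideal (BR p l))
    (h1 : Jb p l 0 ((p : ℤ) ^ (e+2)) ≤ I) (h2 : I ≤ Jb p l 0 ((p : ℤ) ^ (e+1))) :
    I = Jb p l 0 ((p : ℤ) ^ (e+2)) ∨ I = Jb p l 0 ((p : ℤ) ^ (e+1)) := by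
  simp only [BR.Jb_zero_eq_comap] at *
  exact (Ideal.comap_covBy_of_surjective BR.cardHom_surjective
    (Ideal.span_singleton_pow_succ_covBy (Nat.prime_iff_prime_int.mp hp) (e + 1))).eq_or_eq h1 h2

/-- There is no ideal of `R_ℓ` strictly between `J_{ℓ,0}(p^{e+2})` and `J_{ℓ,0}(p^{e+1})`. -/
theorem no_ideal_between_Jp (p l e : ℕ) (hp : p.Prime) (hl : 1 ≤ l) (I : Ideal (BR p l))
    (h1 : Jb p l 0 ((p : ℤ) ^ (e+2)) ≤ I) (h2 : I ≤ Jb p l 0 ((p : ℤ) ^ (e+1))) :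
    I = Jb p l 0 ((p : ℤ) ^ (e+2)) ∨ I = Jb p l 0 ((p : ℤ) ^ (e+1)) :=
  no_ideal_between_Jp_general p l e hp I h1 h2
end

section
/- Let $p$ be a prime, $\ell \ge 1$, $e \ge 0$, and $n = p^{e+1}$. The preimage under the restriction ring homomorphism $\mathrm{res}^\ell_{\ell-1} : R_\ell \to R_{\ell-1}$ of the ideal $J_{\ell-1,0}(p^{e+1}) \subseteq R_{\ell-1}$ equals $J_{\ell,0}(p^{e+1}) \subseteq R_\ell$. -/
def augmentation (p l : ℕ) : BR p l →+* ℤ :=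
  (Pi.evalRingHom (fun _ => ℤ) 0).comp (BR p l).subtype

lemma augmentation_apply (p l : ℕ) (a : BR p l) : augmentation p l a = (a : ℕ → ℤ) 0 := rfl

lemma augmentation_Xb (p l i : ℕ) : augmentation p l (Xb p l i) = (p : ℤ) ^ (l - i) := by
  simp [augmentation_apply, Xb, Xe]

lemma augmentation_Fb (p l i : ℕ) : augmentation p l (Fb p l i) = 0 := by
  rw [Fb, map_sub, map_pow, map_natCast, augmentation_Xb, sub_self]

lemma Fb_eq_zero_of_le {p l i : ℕ} (h : l ≤ i) : Fb p l i = 0 := by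
  have hX : Xb p l i = 1 := by
    ext j
    simp [Xb, Xe, Nat.sub_eq_zero_of_le h, (min_le_right j l).trans h]
  simp [Fb, hX, Nat.sub_eq_zero_of_le h]

lemma intCast_mem_Jb (p l k : ℕ) (x : ℤ) : (x : BR p l) ∈ Jb p l k x :=
  Ideal.subset_span (Set.mem_insert _ _)

lemma Fb_mem_Jb (p l i : ℕ) (x : ℤ) : Fb p l i ∈ Jb p l 0 x := by
  rcases lt_or_ge i l with hil | hli
  · exact Ideal.subset_span (Set.mem_insert_of_mem _ ⟨i, ⟨i.zero_le, hil⟩, rfl⟩)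
  · rw [Fb_eq_zero_of_le hli]
    exact zero_mem _

lemma mk_Jb_zero_eq_augmentation (p l : ℕ) (x : ℤ) (a : BR p l) :
    Ideal.Quotient.mk (Jb p l 0 x) a = (augmentation p l a : BR p l ⧸ Jb p l 0 x) := by
  suffices h : Ideal.Quotient.mk (Jb p l 0 x) = (Int.castRingHom _).comp (augmentation p l) from
    congrArg (· a) h
  refine RingHom.eq_of_eqOn_set_dense Subring.closure_closure_coe_preimage ?_
  rintro ⟨_, _⟩ ⟨i, rfl⟩
  have hXb : Xb p l i = Fb p l i + (p : BR p l) ^ (l - i) := (sub_add_cancel _ _).symm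
  change Ideal.Quotient.mk _ (Xb p l i) = ((augmentation p l (Xb p l i) : ℤ) : BR p l ⧸ _)
  rw [augmentation_Xb, hXb, map_add, Ideal.Quotient.eq_zero_iff_mem.2 (Fb_mem_Jb p l i x)]
  simp

lemma Jb_zero_eq_comap (p l : ℕ) (x : ℤ) :
    Jb p l 0 x = (Ideal.span {x}).comap (augmentation p l) := by
  refine le_antisymm (Ideal.span_le.2 ?_) fun a ha => ?_
  · rintro _ (rfl | ⟨i, -, rfl⟩)
    · rw [SetLike.mem_coe, Ideal.mem_comap, map_intCast]
      exact Ideal.mem_span_singleton_self x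
    · rw [SetLike.mem_coe, Ideal.mem_comap, augmentation_Fb]
      exact zero_mem _
  · obtain ⟨c, hc⟩ := Ideal.mem_span_singleton'.1 (Ideal.mem_comap.1 ha)
    rw [← Ideal.Quotient.eq_zero_iff_mem, mk_Jb_zero_eq_augmentation, ← hc, Int.cast_mul,
      ← map_intCast (Ideal.Quotient.mk (Jb p l 0 x)) x,
      Ideal.Quotient.eq_zero_iff_mem.2 (intCast_mem_Jb p l 0 x), mul_zero]

lemma mem_Jb_zero_iff {p l : ℕ} {x : ℤ} {a : BR p l} :
    a ∈ Jb p l 0 x ↔ x ∣ (a : ℕ → ℤ) 0 := by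
  rw [Jb_zero_eq_comap, Ideal.mem_comap, Ideal.mem_span_singleton, augmentation_apply]

lemma resA_apply (k : ℕ) (f : ℕ → ℤ) (j : ℕ) : resA k f j = f (min j k) := rfl

lemma resA_Xe_of_lt {p l k i : ℕ} (hik : i < k) (hkl : k ≤ l) :
    resA k (Xe p l i) = (p : ℕ → ℤ) ^ (l - k) * Xe p k i := by
  ext j
  simp only [resA_apply, Xe, Pi.mul_apply, Pi.pow_apply, Pi.natCast_apply,
    show min (min j k) l = min j k by omega]
  split_ifs
  · rw [← pow_add]
    congr 1
    omega
  · rw [mul_zero]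

lemma resA_Xe_of_le {p l k i : ℕ} (hki : k ≤ i) :
    resA k (Xe p l i) = (p : ℕ → ℤ) ^ (l - i) := by
  ext j
  have hji : min (min j k) l ≤ i := by omega
  simp only [resA_apply, Xe, if_pos hji, Pi.pow_apply, Pi.natCast_apply]

lemma BR_le_comap_resA {p l k : ℕ} (hkl : k ≤ l) : BR p l ≤ (BR p k).comap (resA k) := by
  refine Subring.closure_le.2 (Set.range_subset_iff.2 fun i => ?_)
  rcases lt_or_ge i k with hik | hki
  · rw [SetLike.mem_coe, Subring.mem_comap, resA_Xe_of_lt hik hkl]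
    exact mul_mem (pow_mem (natCast_mem _ p) _) (Subring.subset_closure ⟨i, rfl⟩)
  · rw [SetLike.mem_coe, Subring.mem_comap, resA_Xe_of_le hki]
    exact pow_mem (natCast_mem _ p) _

theorem res_preimage_Jp_general (p l e : ℕ) :
    ∀ a : BR p l,
      (∃ b : BR p (l-1), (b : ℕ → ℤ) = resA (l-1) (a : ℕ → ℤ)
          ∧ b ∈ Jb p (l-1) 0 ((p : ℤ) ^ (e+1)))
      ↔ a ∈ Jb p l 0 ((p : ℤ) ^ (e+1)) := by
  intro a
  have hres : resA (l-1) (a : ℕ → ℤ) 0 = (a : ℕ → ℤ) 0 := by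
    rw [resA_apply, Nat.zero_min]
  rw [mem_Jb_zero_iff]
  constructor
  · rintro ⟨b, hb, hbJ⟩
    rwa [mem_Jb_zero_iff, hb, hres] at hbJ
  · intro ha
    refine ⟨⟨_, BR_le_comap_resA (Nat.sub_le l 1) a.2⟩, rfl, ?_⟩
    exact mem_Jb_zero_iff.2 (hres ▸ ha)

/-- The preimage of `J_{ℓ-1,0}(p^{e+1}) ⊆ R_{ℓ-1}` under the restriction
`res^ℓ_{ℓ-1} : R_ℓ → R_{ℓ-1}` equals `J_{ℓ,0}(p^{e+1}) ⊆ R_ℓ`.  (The element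
`b ∈ R_{ℓ-1}` below is the restriction of `a`, viewed inside the ghost ring.) -/
theorem res_preimage_Jp (p l e : ℕ) (hp : p.Prime) (hl : 1 ≤ l) :
    ∀ a : BR p l,
      (∃ b : BR p (l-1), (b : ℕ → ℤ) = resA (l-1) (a : ℕ → ℤ)
          ∧ b ∈ Jb p (l-1) 0 ((p : ℤ) ^ (e+1)))
      ↔ a ∈ Jb p l 0 ((p : ℤ) ^ (e+1)) :=
  res_preimage_Jp_general p l e
end

section
/- Let $p, q$ be distinct primes and $\ell \ge 1$. The ideal of the Burnside ring $R_\ell$ of $C_{p^\ell}$ generated by $\mathrm{ind}^\ell_{\ell-1}((q)) \cup \mathrm{jnd}^\ell_{\ell-1}((q))$, where $(q) \subseteq R_{\ell-1}$ is the principal ideal generated by $q$, equals the principal ideal $(q) \subseteq R_\ell$. -/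
/-! Read elements of `BR p l` through their marks: they are exactly the vectors that are constant
from level `l` on and satisfy `a i ≡ a (i + 1) mod p ^ (l - i)`. In these terms both transfers
visibly map `R_{l-1}` into `R_l`. Fermat gives `q ^ (p - 1) - 1 = p k`, and then
`jnd q = q (1 + k ind 1)` and `ind q = q ind 1`; as `ind` is linear over restriction and `jnd` is
multiplicative, every generator is a multiple of `q`, while conversely `q = jnd q - k ind q`. -/

theorem pow_succ_dvd_pow_sub_pow_of_pow_dvd_sub {R : Type*} [CommRing R] {p n : ℕ} {a b : R}
    (hn : n ≠ 0) (h : (p : R) ^ n ∣ a - b) : (p : R) ^ (n + 1) ∣ a ^ p - b ^ p := by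
  have hp : (p : R) ∣ a - b := (dvd_pow_self _ hn).trans h
  rw [← geom_sum₂_mul, pow_succ']
  exact mul_dvd_mul (dvd_geom_sum₂_self hp) h

theorem Subring.mem_span_singleton_of_coe_eq_mul {R : Type*} [CommRing R] {S : Subring R}
    {a x : S} {y : R} (hy : y ∈ S) (h : (a : R) = x * y) : a ∈ Ideal.span {x} :=
  Ideal.mem_span_singleton'.mpr ⟨⟨y, hy⟩, Subtype.ext (by simp [h, mul_comm])⟩

def congruenceSubring (p l : ℕ) : Subring (ℕ → ℤ) where
  carrier := {a | (∀ j, l ≤ j → a j = a l) ∧ ∀ i < l, a i ≡ a (i + 1) [ZMOD (p : ℤ) ^ (l - i)]}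
  mul_mem' ha hb := ⟨fun j hj => by simp [ha.1 j hj, hb.1 j hj],
    fun i hi => (ha.2 i hi).mul (hb.2 i hi)⟩
  one_mem' := ⟨fun _ _ => rfl, fun _ _ => rfl⟩
  add_mem' ha hb := ⟨fun j hj => by simp [ha.1 j hj, hb.1 j hj],
    fun i hi => (ha.2 i hi).add (hb.2 i hi)⟩
  zero_mem' := ⟨fun _ _ => rfl, fun _ _ => rfl⟩
  neg_mem' ha := ⟨fun j hj => by simp [ha.1 j hj], fun i hi => (ha.2 i hi).neg⟩

theorem Xe_mem_congruenceSubring (p l i : ℕ) : Xe p l i ∈ congruenceSubring p l := by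
  refine ⟨fun j hj => by simp [Xe, hj], fun k hk => ?_⟩
  simp only [Xe, min_eq_left hk.le, min_eq_left (Nat.succ_le_of_lt hk)]
  split_ifs
  · rfl
  · obtain rfl : k = i := by omega
    exact Int.modEq_zero_iff_dvd.mpr dvd_rfl
  · omega
  · rfl

theorem congruenceSubring_le_BR (p l : ℕ) : congruenceSubring p l ≤ BR p l := by
  intro a ⟨hstab, hcongr⟩
  set d : ℕ → ℤ := fun i => (a (i + 1) - a i) / (p : ℤ) ^ (l - i)
  have hdecomp : a = (a l : ℕ → ℤ) - ∑ i ∈ Finset.range l, (d i : ℕ → ℤ) * Xe p l i := by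
    funext j
    have hterm : ∀ i ∈ Finset.range l, d i * Xe p l i j =
        if min j l ≤ i then a (i + 1) - a i else 0 := by
      intro i hi
      simp only [Xe]
      split_ifs
      · exact Int.ediv_mul_cancel ((hcongr i (Finset.mem_range.mp hi)).dvd)
      · exact mul_zero _
    simp only [Pi.sub_apply, Pi.intCast_apply, Int.cast_id, Finset.sum_apply, Pi.mul_apply]
    rw [Finset.sum_congr rfl hterm, ← Finset.sum_filter, Finset.range_eq_Ico,
      Finset.Ico_filter_le, max_eq_right (Nat.zero_le _),
      Finset.sum_Ico_sub (f := a) (min_le_right j l)]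
    rcases le_total l j with h | h
    · simp [min_eq_right h, hstab j h]
    · simp [min_eq_left h]
  rw [hdecomp]
  refine sub_mem (intCast_mem _ _) (sum_mem fun i _ => mul_mem (intCast_mem _ _) ?_)
  exact Subring.subset_closure ⟨i, rfl⟩

theorem BR_eq_congruenceSubring (p l : ℕ) : BR p l = congruenceSubring p l :=
  le_antisymm (Subring.closure_le.mpr (Set.range_subset_iff.mpr (Xe_mem_congruenceSubring p l)))
    (congruenceSubring_le_BR p l)

theorem indA_mem {p m : ℕ} {b : ℕ → ℤ} (hb : b ∈ BR p m) : indA p m b ∈ BR p (m + 1) := by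
  rw [BR_eq_congruenceSubring] at hb ⊢
  refine ⟨fun j hj => by simp [indA, show ¬j ≤ m by omega], fun i hi => ?_⟩
  rcases Nat.lt_or_ge i m with hi' | hi'
  · simp only [indA, if_pos hi'.le, if_pos (Nat.succ_le_of_lt hi'),
      show m + 1 - i = m - i + 1 by omega, pow_succ']
    exact (hb.2 i hi').mul_left'
  · obtain rfl : m = i := by omega
    simp only [indA, le_refl, if_true, show ¬m + 1 ≤ m by omega, Nat.add_sub_cancel_left,
      pow_one]
    exact Int.modEq_zero_iff_dvd.mpr (dvd_mul_right _ _)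

theorem jndA_mem {p m : ℕ} (hp : p.Prime) {b : ℕ → ℤ} (hb : b ∈ BR p m) :
    jndA p m b ∈ BR p (m + 1) := by
  rw [BR_eq_congruenceSubring] at hb ⊢
  refine ⟨fun j hj => by simp [jndA, show ¬j ≤ m by omega], fun i hi => ?_⟩
  rcases Nat.lt_or_ge i m with hi' | hi'
  · simp only [jndA, if_pos hi'.le, if_pos (Nat.succ_le_of_lt hi'),
      show m + 1 - i = m - i + 1 by omega]
    exact (Int.modEq_iff_dvd.mpr
      (pow_succ_dvd_pow_sub_pow_of_pow_dvd_sub (by omega) (hb.2 i hi').dvd))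
  · obtain rfl : m = i := by omega
    simp only [jndA, le_refl, if_true, show ¬m + 1 ≤ m by omega, Nat.add_sub_cancel_left,
      pow_one]
    exact Int.ModEq.pow_prime_eq_self hp _

theorem indA_resA_mul (p m : ℕ) (x b : ℕ → ℤ) : indA p m (resA m x * b) = x * indA p m b := by
  funext j
  simp only [indA, Pi.mul_apply]
  split_ifs with hj
  · rw [show resA m x j = x j from congrArg x (min_eq_left hj)]
    ring
  · simp

theorem indA_intCast (p m : ℕ) (n : ℤ) : indA p m n = n * indA p m 1 := by
  rw [← indA_resA_mul, map_intCast, mul_one]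

theorem jndA_mul (p m : ℕ) (a b : ℕ → ℤ) : jndA p m (a * b) = jndA p m a * jndA p m b := by
  funext j
  by_cases hj : j ≤ m <;> simp [jndA, hj, mul_pow]

theorem jndA_intCast {p : ℕ} (m : ℕ) (hp : 0 < p) {n k : ℤ} (hk : n ^ (p - 1) - 1 = p * k) :
    jndA p m n = n * (1 + k * indA p m 1) := by
  funext j
  by_cases hj : j ≤ m
  · simp only [jndA, indA, if_pos hj, Pi.intCast_apply, Pi.mul_apply, Pi.add_apply, Pi.one_apply,
      Int.cast_id, mul_one]
    rw [mul_comm k, ← hk, add_sub_cancel, ← pow_succ', Nat.sub_add_cancel hp]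
  · simp [jndA, indA, hj]

/-- The ideal of `R_ℓ` generated by `ind^ℓ_{ℓ-1}((q)) ∪ jnd^ℓ_{ℓ-1}((q))`, where
`(q) ⊆ R_{ℓ-1}` is the principal ideal generated by the prime `q ≠ p`, equals the
principal ideal `(q) ⊆ R_ℓ`. -/
theorem S_of_q (p q l : ℕ) (hp : p.Prime) (hq : q.Prime) (hpq : q ≠ p) (hl : 1 ≤ l) :
    Ideal.span {a : BR p l | ∃ b : BR p (l-1),
        b ∈ Ideal.span {((q : ℤ) : BR p (l-1))} ∧
        ((a : ℕ → ℤ) = indA p (l-1) (b : ℕ → ℤ) ∨ (a : ℕ → ℤ) = jndA p (l-1) (b : ℕ → ℤ))}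
      = Ideal.span {((q : ℤ) : BR p l)} := by
  obtain ⟨m, rfl⟩ : ∃ m, l = m + 1 := ⟨l - 1, by omega⟩
  simp only [Nat.add_sub_cancel]
  have hqp : IsCoprime (q : ℤ) p :=
    Nat.isCoprime_iff_coprime.mpr ((Nat.coprime_primes hq hp).mpr hpq)
  obtain ⟨k, hk⟩ := (Int.ModEq.pow_card_sub_one_eq_one hp hqp).symm.dvd
  have hjnd := jndA_intCast m hp.pos hk
  have hind1 : indA p m 1 ∈ BR p (m + 1) := indA_mem (one_mem _)
  apply le_antisymm
  · rw [Ideal.span_le]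
    rintro a ⟨b, hb, hab | hab⟩ <;> obtain ⟨c, rfl⟩ := Ideal.mem_span_singleton'.mp hb
    · refine Subring.mem_span_singleton_of_coe_eq_mul (indA_mem c.2) ?_
      rw [hab, Subring.coe_mul, Subring.coe_intCast, mul_comm, ← map_intCast (resA m),
        indA_resA_mul]
      rfl
    · refine Subring.mem_span_singleton_of_coe_eq_mul
        (mul_mem (add_mem (one_mem _) (mul_mem (intCast_mem _ k) hind1)) (jndA_mem hp c.2)) ?_
      rw [hab, Subring.coe_mul, Subring.coe_intCast, jndA_mul, hjnd]
      simp only [Subring.coe_intCast]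
      ring
  · rw [Ideal.span_le, Set.singleton_subset_iff]
    have hb := Ideal.mem_span_singleton_self ((q : ℤ) : BR p m)
    have hq_eq : ((q : ℤ) : BR p (m + 1)) = ⟨jndA p m (q : ℤ), jndA_mem hp (intCast_mem _ _)⟩ -
        k * ⟨indA p m (q : ℤ), indA_mem (intCast_mem _ _)⟩ := by
      apply Subtype.ext
      simp only [AddSubgroupClass.coe_sub, Subring.coe_mul, Subring.coe_intCast, hjnd,
        indA_intCast]
      ring
    rw [hq_eq]
    exact sub_mem (Ideal.subset_span ⟨_, hb, Or.inr rfl⟩)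
      (Ideal.mul_mem_left _ _ (Ideal.subset_span ⟨_, hb, Or.inl rfl⟩))
end

section
/- Let $p$ be a prime, $k \ge 1$, and $q$ a prime with $q \ne p$. In the Burnside ring $R_k$ of $C_{p^k}$, suppose $a = q\beta + mF_{k,k-1}$ for some $\beta \in R_k$, $m \in \mathbb{Z}$, and suppose $c \in R_k$ has the form $c = c_k + \sum_{t=0}^{k-1} u_t X_{k,t}$, i.e. $c \equiv c_k \pmod{(X_{k,0},\ldots,X_{k,k-1})}$. If $a \cdot c \in (q)$ and $q \nmid p c_k$, then $q \mid m$, hence $a \in (q)$. -/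
/-! Auxiliary lemmas -/

lemma Fb_val (p k : ℕ) (i : ℕ) (j : ℕ) :
    (Fb p k i : ℕ → ℤ) j = Xe p k i j - (p:ℤ)^(k-i) := by
  simp [Fb, Xb, Pi.pow_apply]

lemma Fb_mul_Xb (p k t : ℕ) (hk : 1 ≤ k) (ht : t < k) :
    Fb p k (k-1) * Xb p k t = 0 := by
  apply Subtype.ext
  funext j
  show (Fb p k (k-1) : ℕ → ℤ) j * (Xb p k t : ℕ → ℤ) j = 0
  rcases lt_or_ge j k with hj | hj
  · have h1 : (Fb p k (k-1) : ℕ → ℤ) j = 0 := by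
      rw [Fb_val]
      have : min j k ≤ k - 1 := by omega
      simp [Xe, this]
    simp [h1]
  · have h2 : (Xb p k t : ℕ → ℤ) j = 0 := by
      show Xe p k t j = 0
      have : ¬ min j k ≤ t := by omega
      simp [Xe, this]
    simp [h2]

/-- In `R_k` (`k ≥ 1`), let `a = qβ + m F_{k,k-1}` and `c = c_k + ∑_{t<k} u_t X_{k,t}`
with `q ∤ p·c_k`.  If `a·c ∈ (q)` then `q ∣ m`, hence `a ∈ (q)`. -/
theorem prime_step (p q k : ℕ) (hp : p.Prime) (hq : q.Prime) (hpq : q ≠ p) (hk : 1 ≤ k)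
    (a b c : BR p k) (m ck : ℤ) (u : ℕ → ℤ)
    (ha : a = (q : BR p k) * b + m • Fb p k (k-1))
    (hc : c = (ck : BR p k) + ∑ t ∈ Finset.range k, u t • Xb p k t)
    (hck : ¬ (q : ℤ) ∣ ((p : ℤ) * ck))
    (hac : a * c ∈ Ideal.span {((q : ℤ) : BR p k)}) :
    (q : ℤ) ∣ m ∧ a ∈ Ideal.span {((q : ℤ) : BR p k)} := by
  have hF : ∀ t ∈ Finset.range k, Fb p k (k-1) * (u t • Xb p k t) = 0 := by
    intro t ht
    rw [mul_smul_comm, Fb_mul_Xb p k t hk (Finset.mem_range.mp ht), smul_zero]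
  have h1 : Fb p k (k-1) * (∑ t ∈ Finset.range k, u t • Xb p k t) = 0 := by
    rw [Finset.mul_sum]; exact Finset.sum_eq_zero hF
  have key : a * c - (q : BR p k) * (b * c) = ((m * ck : ℤ) : BR p k) * Fb p k (k-1) := by
    rw [ha, hc, zsmul_eq_mul]
    push_cast
    linear_combination (m : BR p k) * h1
  have hdvd : ((q : ℤ) : BR p k) ∣ ((m * ck : ℤ) : BR p k) * Fb p k (k-1) := by
    rw [← key]
    exact dvd_sub (Ideal.mem_span_singleton.mp hac) ⟨b * c, by push_cast; ring⟩
  obtain ⟨d, hd⟩ := hdvd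
  have hev := congrFun (congrArg Subtype.val hd) k
  have hFk : (Fb p k (k-1) : ℕ → ℤ) k = -(p : ℤ) := by
    rw [Fb_val]
    have h3 : k - (k-1) = 1 := by omega
    simp only [Xe, min_self, if_neg (show ¬ k ≤ k - 1 by omega), h3, pow_one, zero_sub]
  have hev2 : (m * ck) * (-(p:ℤ)) = (q:ℤ) * (d : ℕ → ℤ) k := by
    simp only [MulMemClass.coe_mul, Pi.mul_apply, SubringClass.coe_intCast,
      Pi.intCast_apply, hFk] at hev
    push_cast at hev ⊢
    linarith [hev]
  have hqZ : Prime (q : ℤ) := Nat.prime_iff_prime_int.mp hq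
  have hdm : (q:ℤ) ∣ m * (ck * p) := ⟨-((d : ℕ → ℤ) k), by linarith [hev2]⟩
  have hm : (q:ℤ) ∣ m := by
    rcases hqZ.dvd_mul.mp hdm with h | h
    · exact h
    · exact absurd (by rwa [mul_comm] at h) hck
  refine ⟨hm, ?_⟩
  rw [Ideal.mem_span_singleton, ha]
  obtain ⟨m', hm'⟩ := hm
  refine dvd_add ⟨b, by push_cast; ring⟩ ?_
  refine ⟨(m' : BR p k) * Fb p k (k-1), ?_⟩
  rw [zsmul_eq_mul, hm']
  push_cast
  ring
end

section
/- Let $p$ be a prime, $H \le G$ cyclic $p$-groups of orders $p^k \le p^\ell$, and $A = \coprod_{0\le i \le k} (\coprod_{m_i} G/H_i)$ a finite $G$-set over $G/H$ (with $m_i \ge 0$). For a subgroup $K = H_j \le G$, the number of sections $s : G/H \to A$ of the projection $A \to G/H$ whose stabilizer contains $K$ equals $\bigl(\sum_{(K\cap H) \le H_i \le H} m_i\,|H : H_i|\bigr)^{|G : KH|}$. -/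
attribute [local instance] Classical.propDecidable

/-! For `G = C_{p^ℓ} = ℤ/p^ℓℤ`, `H = H_k` its subgroup of order `p^k`, we model the
`G`-set `G/H_i` as `ZMod (p^(ℓ-i))` with `G` acting by translation through `ZMod.cast`.
`TotA` is the `G`-set `A = ∐_{0 ≤ i ≤ k} (∐_{m_i} G/H_i)`, `PrA` the projection `A → G/H`,
and `actA` the `G`-action on sections `s : G/H → A` given by `(g•s)(x) = g·s(g⁻¹x)`. -/

/-- The `G`-set `A = ∐_{0 ≤ i ≤ k} (∐_{m_i} G/H_i)`. -/
def TotA (p l k : ℕ) (m : ℕ → ℕ) : Type :=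
  Σ i : Fin (k+1), Fin (m (i : ℕ)) × ZMod (p ^ (l - (i : ℕ)))

/-- The projection `Pr : A → G/H`, the disjoint union of the natural projections. -/
def PrA (p l k : ℕ) (m : ℕ → ℕ) (a : TotA p l k m) : ZMod (p ^ (l - k)) :=
  ZMod.cast a.2.2

/-- The action of `g ∈ G` on a section `s : G/H → A`, `(g•s)(x) = g·s(g⁻¹x)`. -/
def actA (p l k : ℕ) (m : ℕ → ℕ) (g : ZMod (p ^ l))
    (s : ZMod (p ^ (l - k)) → TotA p l k m) : ZMod (p ^ (l - k)) → TotA p l k m :=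
  fun x => ⟨(s (x - ZMod.cast g)).1, (s (x - ZMod.cast g)).2.1,
            (s (x - ZMod.cast g)).2.2 + ZMod.cast g⟩

/-- The subgroup `H_j = p^{ℓ-j}ℤ/p^ℓℤ` of order `p^j` of `G = ℤ/p^ℓℤ`. -/
def Hs (p l j : ℕ) : AddSubgroup (ZMod (p ^ l)) :=
  AddSubgroup.zmultiples ((p ^ (l - j) : ℕ) : ZMod (p ^ l))

/-! An `H_j`-invariant section is freely determined by its values at one representative `x`
of each `H_j`-orbit of `G/H`, the only constraint being that the value at `x` is fixed by the
stabilizer `H_j ∩ H` of `x`; there are `|G : H_j H|` such orbits. A point of `G/H_i` is fixed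
by `H_j ∩ H` exactly when `H_j ∩ H ≤ H_i`, and the fiber of `G/H_i → G/H` has `|H : H_i|`
points. -/

namespace MulAction

variable {G X Y : Type*} [Group G] [MulAction G X] [MulAction G Y]

@[to_additive]
theorem exists_smul_out_eq (x : X) : ∃ g : G, g • (Quotient.mk (orbitRel G X) x).out = x := by
  obtain ⟨g, hg⟩ := Quotient.mk_out (s := orbitRel G X) x
  exact ⟨g⁻¹, by rw [← hg, inv_smul_smul]⟩

variable (G) in
@[to_additive]
noncomputable def orbitTransporter (x : X) : G := (exists_smul_out_eq x).choose

@[to_additive]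
theorem orbitTransporter_smul_out (x : X) :
    orbitTransporter G x • (Quotient.mk (orbitRel G X) x).out = x :=
  (exists_smul_out_eq x).choose_spec

@[to_additive]
theorem smul_eq_smul_of_smul_eq_smul {a : X} {y : Y} (hy : ∀ g ∈ stabilizer G a, g • y = y)
    {g g' : G} (h : g • a = g' • a) : g • y = g' • y := by
  have hmem : g'⁻¹ * g ∈ stabilizer G a := by
    rw [mem_stabilizer_iff, mul_smul, h, inv_smul_smul]
  calc g • y = g' • (g'⁻¹ * g) • y := by rw [smul_smul, mul_inv_cancel_left]
    _ = g' • y := by rw [hy _ hmem]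

variable (G) in
@[to_additive]
def IsInvariantSection (π : Y → X) (s : X → Y) : Prop :=
  (∀ x, π (s x) = x) ∧ ∀ (g : G) x, g • s (g⁻¹ • x) = s x

@[to_additive]
noncomputable def invariantSectionsEquiv (π : Y → X)
    (hπ : ∀ (g : G) y, π (g • y) = g • π y) :
    {s : X → Y // IsInvariantSection G π s} ≃
      ∀ ω : orbitRel.Quotient G X,
        {y : Y // π y = ω.out ∧ ∀ g ∈ stabilizer G ω.out, g • y = y} where
  toFun s ω := ⟨s.1 ω.out, s.2.1 _, fun g hg => by
    simpa [inv_smul_eq_iff.mpr hg.symm] using s.2.2 g ω.out⟩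
  invFun f := by
    refine ⟨fun x => orbitTransporter G x • (f (Quotient.mk _ x)).1,
      fun x => ?_, fun g x => ?_⟩
    · rw [hπ, (f _).2.1, orbitTransporter_smul_out]
    · have hc := orbitTransporter_smul_out (G := G) (g⁻¹ • x)
      dsimp only
      rw [orbitRel.Quotient.quotient_smul_eq] at hc ⊢
      rw [smul_smul]
      exact smul_eq_smul_of_smul_eq_smul (f _).2.2
        (by rw [mul_smul, hc, smul_inv_smul, orbitTransporter_smul_out])
  left_inv s := by
    ext x
    have hx := orbitTransporter_smul_out (G := G) x
    dsimp only
    rw [← s.2.2 (orbitTransporter G x) x, inv_smul_eq_iff.mpr hx.symm]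
  right_inv f := by
    funext ω
    apply Subtype.ext
    have hω := orbitTransporter_smul_out (G := G) ω.out
    dsimp only
    rw [Quotient.out_eq] at hω ⊢
    exact (f ω).2.2 _ hω

end MulAction

namespace AddAction

variable {G X : Type*} [AddGroup G]

theorem mem_stabilizer_iff_mem_ker [AddGroup X] [AddAction G X] {f : G →+ X}
    (hf : ∀ g x, g +ᵥ x = f g + x) {K : AddSubgroup G} {g : K} {x : X} :
    g ∈ stabilizer K x ↔ (g : G) ∈ f.ker := by
  rw [mem_stabilizer_iff, AddSubgroup.vadd_def, hf, add_eq_right, AddMonoidHom.mem_ker]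

theorem card_orbitRel_quotient [AddCommGroup X] [AddAction G X] {f : G →+ X}
    (hf : ∀ g x, g +ᵥ x = f g + x) (hsurj : Function.Surjective f) (K : AddSubgroup G) :
    Nat.card (orbitRel.Quotient K X) = (K ⊔ f.ker).index := by
  have hrel : ∀ a b : X, orbitRel K X a b ↔ QuotientAddGroup.leftRel (K.map f) a b := by
    intro a b
    rw [orbitRel_apply, QuotientAddGroup.leftRel_apply, mem_orbit_iff]
    constructor
    · rintro ⟨g, rfl⟩
      exact ⟨-g, (-g).2, by rw [AddSubgroup.vadd_def, hf, map_neg]; abel⟩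
    · rintro ⟨g, hg, hfg⟩
      exact ⟨⟨-g, K.neg_mem hg⟩, by rw [AddSubgroup.vadd_def, hf, map_neg]; simp [hfg]⟩
  rw [Nat.card_congr (Quotient.congrRight hrel), ← AddSubgroup.comap_map_eq,
    AddSubgroup.index_comap_of_surjective _ hsurj]
  rfl

end AddAction

@[to_additive]
theorem MonoidHom.card_ker_eq_relIndex {G A B : Type*} [Group G] [Group A] [Group B]
    {f : G →* A} (hf : Function.Surjective f) (g : A →* B) :
    Nat.card g.ker = f.ker.relIndex (g.comp f).ker := by
  rw [← MonoidHom.comap_ker, ← MonoidHom.comap_bot f, Subgroup.relIndex_comap,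
    Subgroup.map_comap_eq_self_of_surjective hf, Subgroup.relIndex_bot_left]

theorem ZMod.ker_castHom {m n : ℕ} (h : m ∣ n) :
    (ZMod.castHom h (ZMod m)).toAddMonoidHom.ker = AddSubgroup.zmultiples (m : ZMod n) := by
  have hcomp : (ZMod.castHom h (ZMod m)).toAddMonoidHom.comp (Int.castAddHom (ZMod n)) =
      Int.castAddHom (ZMod m) :=
    AddMonoidHom.ext_int (by
      simp only [AddMonoidHom.comp_apply, Int.coe_castAddHom, Int.cast_one,
        RingHom.toAddMonoidHom_eq_coe, AddMonoidHom.coe_coe, map_one])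
  rw [← AddSubgroup.map_comap_eq_self_of_surjective (f := Int.castAddHom (ZMod n))
    ZMod.intCast_surjective (AddMonoidHom.ker _), AddMonoidHom.comap_ker, hcomp,
    ZMod.ker_intCastAddHom, AddMonoidHom.map_zmultiples]
  simp
def cosetMap (p l i : ℕ) : ZMod (p ^ l) →+ ZMod (p ^ (l - i)) :=
  (ZMod.castHom (pow_dvd_pow p (Nat.sub_le l i)) _).toAddMonoidHom

theorem cosetMap_surjective (p l i : ℕ) : Function.Surjective (cosetMap p l i) :=
  ZMod.castHom_surjective (pow_dvd_pow p (Nat.sub_le l i))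

theorem Hs_eq_ker_cosetMap (p l i : ℕ) : Hs p l i = (cosetMap p l i).ker :=
  (ZMod.ker_castHom _).symm

theorem castHom_comp_cosetMap {p l i k : ℕ} (h : p ^ (l - k) ∣ p ^ (l - i)) :
    (ZMod.castHom h (ZMod (p ^ (l - k)))).toAddMonoidHom.comp (cosetMap p l i) = cosetMap p l k :=
  congrArg RingHom.toAddMonoidHom (ZMod.castHom_comp h (pow_dvd_pow p (Nat.sub_le l i)))

instance (p l i : ℕ) : AddAction (ZMod (p ^ l)) (ZMod (p ^ (l - i))) :=
  AddAction.compHom _ (cosetMap p l i)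

theorem vadd_eq_cosetMap_add {p l i : ℕ} (g : ZMod (p ^ l)) (x : ZMod (p ^ (l - i))) :
    g +ᵥ x = cosetMap p l i g + x :=
  rfl

instance (p l k : ℕ) (m : ℕ → ℕ) : AddAction (ZMod (p ^ l)) (TotA p l k m) where
  vadd g a := ⟨a.1, a.2.1, a.2.2 + cosetMap p l a.1 g⟩
  zero_vadd := by
    rintro ⟨i, u, v⟩
    change (⟨i, u, v + cosetMap p l i 0⟩ : TotA p l k m) = ⟨i, u, v⟩
    rw [map_zero, add_zero]
  add_vadd g h := by
    rintro ⟨i, u, v⟩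
    change (⟨i, u, v + cosetMap p l i (g + h)⟩ : TotA p l k m) =
      ⟨i, u, v + cosetMap p l i h + cosetMap p l i g⟩
    rw [map_add, add_comm (cosetMap p l i g), add_assoc]

theorem TotA.vadd_eq_self_iff {p l k : ℕ} {m : ℕ → ℕ} {g : ZMod (p ^ l)}
    {a : TotA p l k m} :
    g +ᵥ a = a ↔ g ∈ Hs p l a.1 := by
  obtain ⟨i, u, v⟩ := a
  rw [Hs_eq_ker_cosetMap]
  change (⟨i, u, v + cosetMap p l i g⟩ : TotA p l k m) = ⟨i, u, v⟩ ↔ _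
  simp

theorem PrA_vadd {p l k : ℕ} {m : ℕ → ℕ} (g : ZMod (p ^ l)) (a : TotA p l k m) :
    PrA p l k m (g +ᵥ a) = g +ᵥ PrA p l k m a := by
  have h : p ^ (l - k) ∣ p ^ (l - a.1) := pow_dvd_pow p (by omega)
  rw [vadd_eq_cosetMap_add, ← castHom_comp_cosetMap h]
  change ZMod.castHom h _ (a.2.2 + cosetMap p l a.1 g) = _
  rw [map_add, add_comm]
  rfl

theorem actA_apply {p l k : ℕ} {m : ℕ → ℕ} (g : ZMod (p ^ l))
    (s : ZMod (p ^ (l - k)) → TotA p l k m) (x : ZMod (p ^ (l - k))) :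
    actA p l k m g s x = g +ᵥ s (-g +ᵥ x) := by
  rw [vadd_eq_cosetMap_add, map_neg, neg_add_eq_sub]
  rfl

theorem isInvariantSection_PrA_iff {p l k : ℕ} {m : ℕ → ℕ} {K : AddSubgroup (ZMod (p ^ l))}
    {s : ZMod (p ^ (l - k)) → TotA p l k m} :
    AddAction.IsInvariantSection K (PrA p l k m) s ↔
      (∀ x, PrA p l k m (s x) = x) ∧ ∀ g ∈ K, actA p l k m g s = s := by
  simp only [AddAction.IsInvariantSection, funext_iff, actA_apply]
  exact and_congr_right' ⟨fun h g hg => h ⟨g, hg⟩, fun h g => h g g.2⟩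

theorem card_fiber_castHom {p l i k : ℕ} (hik : i ≤ k) (x : ZMod (p ^ (l - k))) :
    Nat.card {v : ZMod (p ^ (l - i)) // ZMod.cast v = x} = (Hs p l i).relIndex (Hs p l k) := by
  have h : p ^ (l - k) ∣ p ^ (l - i) := pow_dvd_pow p (by omega)
  let π := (ZMod.castHom h (ZMod (p ^ (l - k)))).toAddMonoidHom
  calc Nat.card {v : ZMod (p ^ (l - i)) // ZMod.cast v = x}
      = Nat.card π.ker :=
        Nat.card_congr (π.fiberEquivKerOfSurjective (ZMod.castHom_surjective h) x)
    _ = (cosetMap p l i).ker.relIndex (π.comp (cosetMap p l i)).ker :=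
      AddMonoidHom.card_ker_eq_relIndex (cosetMap_surjective p l i) π
    _ = (Hs p l i).relIndex (Hs p l k) := by
      rw [castHom_comp_cosetMap h, Hs_eq_ker_cosetMap, Hs_eq_ker_cosetMap]

def TotA.fiberEquiv (p l k : ℕ) (m : ℕ → ℕ) (x : ZMod (p ^ (l - k))) (C : ℕ → Prop) :
    {a : TotA p l k m // PrA p l k m a = x ∧ C a.1} ≃
      Σ i : Fin (k + 1), Fin (m i) × {v : ZMod (p ^ (l - i)) // ZMod.cast v = x ∧ C i} where
  toFun a := ⟨a.1.1, a.1.2.1, a.1.2.2, a.2⟩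
  invFun b := ⟨⟨b.1, b.2.1, b.2.2.1⟩, b.2.2.2⟩
  left_inv _ := rfl
  right_inv _ := rfl

theorem card_fiber_PrA {p l k : ℕ} {m : ℕ → ℕ} [NeZero p] (x : ZMod (p ^ (l - k)))
    (C : ℕ → Prop) :
    Nat.card {a : TotA p l k m // PrA p l k m a = x ∧ C a.1} =
      ∑ i ∈ Finset.range (k + 1), if C i then m i * (Hs p l i).relIndex (Hs p l k) else 0 := by
  rw [Nat.card_congr (TotA.fiberEquiv p l k m x C), Nat.card_sigma,
    ← Fin.sum_univ_eq_sum_range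
      (fun i => if C i then m i * (Hs p l i).relIndex (Hs p l k) else 0)]
  refine Finset.sum_congr rfl fun i _ => ?_
  rw [Nat.card_prod, Nat.card_eq_fintype_card, Fintype.card_fin]
  split_ifs with hC
  · simp only [hC, and_true, card_fiber_castHom (Nat.lt_succ_iff.mp i.2)]
  · simp [hC]

theorem forall_stabilizer_vadd_eq_iff {p l k : ℕ} {m : ℕ → ℕ}
    {K : AddSubgroup (ZMod (p ^ l))} {x : ZMod (p ^ (l - k))} {a : TotA p l k m} :
    (∀ g ∈ AddAction.stabilizer K x, g +ᵥ a = a) ↔ K ⊓ Hs p l k ≤ Hs p l a.1 := by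
  have hstab : ∀ g : K, g ∈ AddAction.stabilizer K x ↔ (g : ZMod (p ^ l)) ∈ Hs p l k := by
    intro g
    rw [Hs_eq_ker_cosetMap]
    exact AddAction.mem_stabilizer_iff_mem_ker vadd_eq_cosetMap_add
  constructor
  · rintro h g ⟨hgK, hgH⟩
    exact TotA.vadd_eq_self_iff.mp (h ⟨g, hgK⟩ ((hstab _).mpr hgH))
  · intro h g hg
    exact TotA.vadd_eq_self_iff.mpr (h ⟨g.2, (hstab g).mp hg⟩)

theorem card_fiber_PrA_stabilizer_fixed {p l k : ℕ} {m : ℕ → ℕ} [NeZero p]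
    (K : AddSubgroup (ZMod (p ^ l))) (x : ZMod (p ^ (l - k))) :
    Nat.card {a : TotA p l k m //
        PrA p l k m a = x ∧ ∀ g ∈ AddAction.stabilizer K x, g +ᵥ a = a} =
      ∑ i ∈ Finset.range (k + 1),
        if K ⊓ Hs p l k ≤ Hs p l i then m i * (Hs p l i).relIndex (Hs p l k) else 0 :=
  (Nat.card_congr (Equiv.subtypeEquivRight fun _ => and_congr_right'
    forall_stabilizer_vadd_eq_iff)).trans (card_fiber_PrA x fun i => K ⊓ Hs p l k ≤ Hs p l i)

theorem card_sections_fixed_by_general (p l k j : ℕ) (hp : p.Prime) (m : ℕ → ℕ) :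
    Nat.card {s : ZMod (p ^ (l - k)) → TotA p l k m //
        (∀ x, PrA p l k m (s x) = x) ∧ ∀ g ∈ Hs p l j, actA p l k m g s = s}
      = (∑ i ∈ Finset.range (k+1),
          if Hs p l j ⊓ Hs p l k ≤ Hs p l i then m i * (Hs p l i).relIndex (Hs p l k)
          else 0) ^ (Hs p l j ⊔ Hs p l k).index := by
  have : NeZero p := ⟨hp.ne_zero⟩
  let := Fintype.ofFinite (AddAction.orbitRel.Quotient (Hs p l j) (ZMod (p ^ (l - k))))
  have hsections := (Equiv.subtypeEquivRight fun s => isInvariantSection_PrA_iff.symm).trans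
    (AddAction.invariantSectionsEquiv (G := Hs p l j) (PrA p l k m)
      fun g => PrA_vadd (g : ZMod (p ^ l)))
  rw [Nat.card_congr hsections, Nat.card_pi,
    Finset.prod_congr rfl fun ω _ => card_fiber_PrA_stabilizer_fixed _ ω.out, Finset.prod_const,
    Finset.card_univ, ← Nat.card_eq_fintype_card,
    AddAction.card_orbitRel_quotient vadd_eq_cosetMap_add (cosetMap_surjective p l k),
    ← Hs_eq_ker_cosetMap]

/-- The number of sections `s : G/H → A` of the projection `A → G/H` whose stabilizer
contains `K = H_j` equals `(∑_{(K∩H) ≤ H_i ≤ H} m_i |H:H_i|)^{|G:KH|}`. -/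
theorem card_sections_fixed_by (p l k j : ℕ) (hp : p.Prime) (hk : k ≤ l) (hj : j ≤ l)
    (m : ℕ → ℕ) :
    Nat.card {s : ZMod (p ^ (l - k)) → TotA p l k m //
        (∀ x, PrA p l k m (s x) = x) ∧ ∀ g ∈ Hs p l j, actA p l k m g s = s}
      = (∑ i ∈ Finset.range (k+1),
          if Hs p l j ⊓ Hs p l k ≤ Hs p l i then m i * (Hs p l i).relIndex (Hs p l k)
          else 0) ^ (Hs p l j ⊔ Hs p l k).index :=
  card_sections_fixed_by_general p l k j hp m
end
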